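/- arXiv:1405.4190 — 4 statements merged into one kernel-verified Lean document; each statement's English description precedes it below -/
import Mathlib

section
/- Let G = (V, E) be a finite undirected connected graph with N vertices, maximum degree deg(G), and diameter diam(G), and let (M, d) be a metric space. Then for every configuration x ∈ M^V, σ²(x) ≤ (N−1)·deg(G)·diam(G)·Δ(x), where Δ and σ² are the disagreement and variance functions. -/
/-!
Joining `u` and `v` by a shortest path, the triangle inequality and Cauchy–Schwarz give
`d²(x_u, x_v) ≤ diam(G) · S`, where `S` is the sum of `d²` over ordered adjacent pairs. Summing
over the `N(N-1)` ordered pairs of distinct vertices bounds `σ²(x)` by `(N-1)/2 · diam(G) · S`,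
and `S ≤ deg(G) · Δ(x)` because every weight `deg(v)⁻¹` is at least `deg(G)⁻¹`.
-/

open Finset

theorem Finset.sum_sum_ite_ne_le_of_le {ι : Type*} [Fintype ι] [DecidableEq ι]
    {f : ι → ι → ℝ} {C : ℝ} (hf : ∀ i j, i ≠ j → f i j ≤ C) :
    ∑ i, ∑ j, (if i ≠ j then f i j else 0) ≤ Fintype.card ι * (Fintype.card ι - 1) * C := by
  have h_row : ∀ i, ∑ j, (if i ≠ j then f i j else 0) ≤ (Fintype.card ι - 1) * C := by
    intro i
    rw [← sum_filter, filter_ne]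
    calc ∑ j ∈ univ.erase i, f i j ≤ #(univ.erase i) • C :=
          sum_le_card_nsmul _ _ _ fun j hj => hf i j (ne_of_mem_erase hj).symm
      _ = (Fintype.card ι - 1) * C := by
          rw [card_erase_of_mem (mem_univ i), nsmul_eq_mul, card_univ,
            Nat.cast_pred (Fintype.card_pos_iff.mpr ⟨i⟩)]
  calc ∑ i, ∑ j, (if i ≠ j then f i j else 0) ≤ ∑ _i : ι, (Fintype.card ι - 1) * C :=
        sum_le_sum fun i _ => h_row i
    _ = _ := by rw [sum_const, card_univ, nsmul_eq_mul, mul_assoc]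

namespace SimpleGraph

variable {V M : Type*} {G : SimpleGraph V}

-- Inside this namespace a bare `dist` would be `SimpleGraph.dist`, hence `Dist.dist`.

theorem Walk.dist_le_sum_darts [PseudoMetricSpace M] (x : V → M) {u v : V} (p : G.Walk u v) :
    Dist.dist (x u) (x v) ≤ (p.darts.map fun d => Dist.dist (x d.fst) (x d.snd)).sum := by
  induction p with
  | nil => simp
  | cons _ q ih => simpa using (dist_triangle _ _ _).trans (add_le_add le_rfl ih)

theorem Walk.IsPath.dist_sq_le [Fintype V] [DecidableEq V] [DecidableRel G.Adj]
    [PseudoMetricSpace M] (x : V → M) {u v : V} {p : G.Walk u v} (hp : p.IsPath) :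
    Dist.dist (x u) (x v) ^ 2 ≤
      p.length * ∑ a, ∑ b, if G.Adj a b then Dist.dist (x a) (x b) ^ 2 else 0 := by
  set f : V × V → ℝ := fun q => Dist.dist (x q.1) (x q.2)
  set L := p.darts.map Dart.toProd
  have hL : L.Nodup :=
    (darts_nodup_of_support_nodup hp.support_nodup).map Dart.toProd_injective
  have h_triangle : Dist.dist (x u) (x v) ≤ ∑ q ∈ L.toFinset, f q := by
    rw [List.sum_toFinset _ hL, List.map_map]
    exact p.dist_le_sum_darts x
  have h_card : (#L.toFinset : ℝ) = p.length := by
    rw [List.toFinset_card_of_nodup hL, List.length_map, Walk.length_darts]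
  have h_edges : ∑ q ∈ L.toFinset, f q ^ 2 ≤ ∑ q : V × V with G.Adj q.1 q.2, f q ^ 2 := by
    refine sum_le_sum_of_subset_of_nonneg (fun q hq => ?_) fun _ _ _ => sq_nonneg _
    obtain ⟨d, -, rfl⟩ := List.mem_map.mp (List.mem_toFinset.mp hq)
    exact mem_filter.mpr ⟨mem_univ _, d.adj⟩
  rw [sum_filter, ← univ_product_univ, sum_product] at h_edges
  calc Dist.dist (x u) (x v) ^ 2 ≤ (∑ q ∈ L.toFinset, f q) ^ 2 :=
        pow_le_pow_left₀ dist_nonneg h_triangle 2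
    _ ≤ #L.toFinset * ∑ q ∈ L.toFinset, f q ^ 2 := sq_sum_le_card_mul_sum_sq
    _ ≤ _ := by rw [h_card]; gcongr

theorem Connected.dist_sq_le_diam_mul [Fintype V] [DecidableEq V] [DecidableRel G.Adj]
    [PseudoMetricSpace M] (hG : G.Connected) (x : V → M) (u v : V) :
    Dist.dist (x u) (x v) ^ 2 ≤
      G.diam * ∑ a, ∑ b, if G.Adj a b then Dist.dist (x a) (x b) ^ 2 else 0 := by
  have := hG.nonempty
  obtain ⟨p, hp, hlen⟩ := hG.exists_path_of_dist u v
  have h_len : (p.length : ℝ) ≤ G.diam := by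
    rw [hlen]
    exact_mod_cast dist_le_diam (connected_iff_ediam_ne_top.mp hG)
  refine (hp.dist_sq_le x).trans (mul_le_mul_of_nonneg_right h_len ?_)
  exact sum_nonneg fun a _ => sum_nonneg fun b _ => by split_ifs <;> positivity

theorem one_le_maxDegree_mul_inv_degree [Fintype V] [DecidableRel G.Adj] {v : V}
    (hv : 0 < G.degree v) : 1 ≤ (G.maxDegree : ℝ) * (G.degree v : ℝ)⁻¹ := by
  rw [← div_eq_mul_inv, one_le_div (by exact_mod_cast hv)]
  exact_mod_cast G.degree_le_maxDegree v

theorem sum_adj_le_maxDegree_mul [Fintype V] [DecidableRel G.Adj] (f : V → V → ℝ)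
    (hf : ∀ v w, 0 ≤ f v w) :
    ∑ v, ∑ w, (if G.Adj v w then f v w else 0) ≤
      G.maxDegree * ((1 / 2 : ℝ) * ∑ v, ∑ w,
        if G.Adj v w then ((G.degree v : ℝ)⁻¹ + (G.degree w : ℝ)⁻¹) * f v w else 0) := by
  simp_rw [mul_sum]
  refine sum_le_sum fun v _ => sum_le_sum fun w _ => ?_
  split_ifs with h
  · have hv := one_le_maxDegree_mul_inv_degree ((G.degree_pos_iff_exists_adj v).mpr ⟨w, h⟩)
    have hw := one_le_maxDegree_mul_inv_degree ((G.degree_pos_iff_exists_adj w).mpr ⟨v, h.symm⟩)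
    nlinarith [hf v w]
  · simp

end SimpleGraph

theorem stmt_6_general {V : Type*} [Fintype V] [DecidableEq V] (G : SimpleGraph V)
    [DecidableRel G.Adj] (hG : G.Connected)
    {M : Type*} [MetricSpace M] (x : V → M) :
    (Fintype.card V : ℝ)⁻¹ *
        ((1 / 2 : ℝ) * ∑ v : V, ∑ w : V, if v ≠ w then dist (x v) (x w) ^ 2 else 0)
      ≤ ((Fintype.card V : ℝ) - 1) * (G.maxDegree : ℝ) * (G.diam : ℝ) *
        ((1 / 2 : ℝ) * ∑ v : V, ∑ w : V,
          (if G.Adj v w then ((G.degree v : ℝ)⁻¹ + (G.degree w : ℝ)⁻¹) * dist (x v) (x w) ^ 2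
            else 0)) := by
  set N : ℝ := (Fintype.card V : ℝ)
  set S := ∑ v, ∑ w, if G.Adj v w then dist (x v) (x w) ^ 2 else 0
  have hN : 1 ≤ N := by
    have := hG.nonempty
    exact Nat.one_le_cast.mpr Fintype.card_pos
  have h_coeff : 0 ≤ (N - 1) * G.diam := mul_nonneg (by linarith) (Nat.cast_nonneg _)
  have hS : 0 ≤ S := sum_nonneg fun v _ => sum_nonneg fun w _ => by split_ifs <;> positivity
  have h_pairs := sum_sum_ite_ne_le_of_le fun v w (_ : v ≠ w) => hG.dist_sq_le_diam_mul x v w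
  have h_edges := G.sum_adj_le_maxDegree_mul _ fun v w => sq_nonneg (dist (x v) (x w))
  calc N⁻¹ * ((1 / 2 : ℝ) * ∑ v, ∑ w, if v ≠ w then dist (x v) (x w) ^ 2 else 0)
      ≤ N⁻¹ * ((1 / 2 : ℝ) * (N * (N - 1) * (G.diam * S))) := by gcongr
    _ = (1 / 2 : ℝ) * ((N - 1) * G.diam * S) := by field_simp [show N ≠ 0 by positivity]
    _ ≤ (N - 1) * G.diam * S := by nlinarith
    _ ≤ (N - 1) * G.diam * (G.maxDegree * _) := mul_le_mul_of_nonneg_left h_edges h_coeff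
    _ = _ := by ring

/-- `σ²(x) ≤ (N-1)·deg(G)·diam(G)·Δ(x)` for any configuration `x` of points of a metric
space indexed by the vertices of a finite connected graph `G`. Sums over unordered pairs
are written as halves of sums over ordered pairs. -/
theorem stmt_6 {V : Type*} [Fintype V] [DecidableEq V] (G : SimpleGraph V)
    [DecidableRel G.Adj] (hG : G.Connected) (hN : 2 ≤ Fintype.card V)
    {M : Type*} [MetricSpace M] (x : V → M) :
    (Fintype.card V : ℝ)⁻¹ *
        ((1 / 2 : ℝ) * ∑ v : V, ∑ w : V, if v ≠ w then dist (x v) (x w) ^ 2 else 0)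
      ≤ ((Fintype.card V : ℝ) - 1) * (G.maxDegree : ℝ) * (G.diam : ℝ) *
        ((1 / 2 : ℝ) * ∑ v : V, ∑ w : V,
          (if G.Adj v w then ((G.degree v : ℝ)⁻¹ + (G.degree w : ℝ)⁻¹) * dist (x v) (x w) ^ 2
            else 0)) :=
  stmt_6_general G hG x
end

section
/- Law of cosines on the unit sphere: for a spherical triangle with vertices p, q, r in S² (with pairwise distances less than π) and angle α at vertex r, cos(d(p,q)) = cos(d(p,r))·cos(d(q,r)) + sin(d(p,r))·sin(d(q,r))·cos(α). -/
/-!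
Project `p` and `q` onto the tangent plane at `r`. Since `r` is a unit vector, the inner
product of the projections is `⟪p, q⟫ - ⟪p, r⟫ ⟪q, r⟫`, and the projection of a unit vector `p`
has length `√(1 - ⟪p, r⟫²) = sin d(p, r)`. Writing the inner product of the projections as the
product of their lengths and the cosine of their angle gives the law of cosines.
-/

open RealInnerProductSpace InnerProductGeometry

section TangentProjection

variable {E : Type*} [NormedAddCommGroup E] [InnerProductSpace ℝ E]

lemma inner_sub_inner_smul_sub_inner_smul {r : E} (hr : ‖r‖ = 1) (p q : E) :
    ⟪p - ⟪p, r⟫ • r, q - ⟪q, r⟫ • r⟫ = ⟪p, q⟫ - ⟪p, r⟫ * ⟪q, r⟫ := by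
  simp only [inner_sub_left, inner_sub_right, real_inner_smul_left, real_inner_smul_right,
    real_inner_self_eq_norm_sq, hr, real_inner_comm r]
  ring

lemma cos_arccos_inner_of_norm_eq_one {x y : E} (hx : ‖x‖ = 1) (hy : ‖y‖ = 1) :
    Real.cos (Real.arccos ⟪x, y⟫) = ⟪x, y⟫ := by
  have hxy := abs_real_inner_le_norm x y
  rw [hx, hy, one_mul] at hxy
  exact Real.cos_arccos (abs_le.mp hxy).1 (abs_le.mp hxy).2

lemma norm_sub_inner_smul_eq_sin_arccos {p r : E} (hp : ‖p‖ = 1) (hr : ‖r‖ = 1) :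
    ‖p - ⟪p, r⟫ • r‖ = Real.sin (Real.arccos ⟪p, r⟫) := by
  rw [norm_eq_sqrt_real_inner, inner_sub_inner_smul_sub_inner_smul hr, real_inner_self_eq_norm_sq,
    hp, Real.sin_arccos]
  ring_nf

end TangentProjection

theorem stmt_9_general (p q r : EuclideanSpace ℝ (Fin 3))
    (hp : ‖p‖ = 1) (hq : ‖q‖ = 1) (hr : ‖r‖ = 1)
    (α : ℝ) (hα : α = InnerProductGeometry.angle (p - ⟪p, r⟫ • r) (q - ⟪q, r⟫ • r)) :
    Real.cos (Real.arccos ⟪p, q⟫) =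
      Real.cos (Real.arccos ⟪p, r⟫) * Real.cos (Real.arccos ⟪q, r⟫) +
        Real.sin (Real.arccos ⟪p, r⟫) * Real.sin (Real.arccos ⟪q, r⟫) * Real.cos α := by
  rw [cos_arccos_inner_of_norm_eq_one hp hq, cos_arccos_inner_of_norm_eq_one hp hr,
    cos_arccos_inner_of_norm_eq_one hq hr, ← norm_sub_inner_smul_eq_sin_arccos hp hr,
    ← norm_sub_inner_smul_eq_sin_arccos hq hr, hα, mul_comm _ (Real.cos _),
    cos_angle_mul_norm_mul_norm, inner_sub_inner_smul_sub_inner_smul hr]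
  ring

/-- Spherical law of cosines on the unit sphere `S² ⊂ ℝ³`, with geodesic distance
`d(a,b) = arccos ⟪a,b⟫` and the angle at `r` computed between the initial tangent
vectors of the geodesics `[r,p]` and `[r,q]`. -/
theorem stmt_9 (p q r : EuclideanSpace ℝ (Fin 3))
    (hp : ‖p‖ = 1) (hq : ‖q‖ = 1) (hr : ‖r‖ = 1)
    (hrp : p - ⟪p, r⟫ • r ≠ 0) (hrq : q - ⟪q, r⟫ • r ≠ 0)
    (α : ℝ) (hα : α = InnerProductGeometry.angle (p - ⟪p, r⟫ • r) (q - ⟪q, r⟫ • r)) :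
    Real.cos (Real.arccos ⟪p, q⟫) =
      Real.cos (Real.arccos ⟪p, r⟫) * Real.cos (Real.arccos ⟪q, r⟫) +
        Real.sin (Real.arccos ⟪p, r⟫) * Real.sin (Real.arccos ⟪q, r⟫) * Real.cos α :=
  stmt_9_general p q r hp hq hr α hα
end

section
/- In a CAT(κ) metric space with κ > 0, for a geodesic triangle with vertices p, q, r such that max{d(m,r), d(p,q)} < π/(2√κ) where m is the midpoint of [p,q], the midpoint convexity inequality χ_κ(d(m,r)) ≤ (χ_κ(d(p,r)) + χ_κ(d(q,r)))/2 holds, where χ_κ(t) = 1 − cos(√κ t). -/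
/-!
Rescale lengths by `√κ` and let `u, v, w` be the rescaled lengths of `[p,q]`, `[p,r]`, `[q,r]`.
The comparison triangle on the sphere of curvature `κ` has some angle `A` at `p`, and by the
spherical law of cosines the cosine of the comparison distance from `r` to the point at
rescaled arclength `t` on `[p,q]` is the sinusoid `f t = cos t cos v + sin t sin v cos A`.
Sum-to-product gives `f 0 + f u = 2 cos (u/2) f (u/2)`, i.e.
`cos v + cos w = 2 cos (u/2) f (u/2)`, and the CAT(κ) inequality gives
`f (u/2) ≤ cos (√κ d(m,r))`. Since `0 ≤ cos (u/2) ≤ 1` and `cos (√κ d(m,r)) ≥ 0`, this yields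
`cos v + cos w ≤ 2 cos (√κ d(m,r))`, which is the claim.
-/

/-- `c` is a geodesic (parametrized by arclength on `[0, dist x y]`) from `x` to `y`. -/
def IsGeodesicSeg {M : Type*} [MetricSpace M] (c : ℝ → M) (x y : M) : Prop :=
  c 0 = x ∧ c (dist x y) = y ∧
    ∀ s ∈ Set.Icc (0 : ℝ) (dist x y), ∀ t ∈ Set.Icc (0 : ℝ) (dist x y),
      dist (c s) (c t) = |s - t|

/-- `M` is a CAT(κ) space (`κ > 0`): every geodesic triangle of perimeter `< 2π/√κ`
is at least as thin as its comparison triangle in the model sphere of curvature `κ`.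
The comparison distance `d'` from the third vertex `r` to the point at arclength `t`
along the side `[p,q]` is encoded through the spherical law of cosines: `cosA` is the
cosine of the comparison angle at `p`, and `d'` satisfies the corresponding spherical
relation. -/
def IsCATK (κ : ℝ) (M : Type*) [MetricSpace M] : Prop :=
  ∀ (p q r : M) (c : ℝ → M), IsGeodesicSeg c p q →
    dist p q + dist q r + dist r p < 2 * Real.pi / Real.sqrt κ →
    ∀ t ∈ Set.Icc (0 : ℝ) (dist p q), ∀ cosA d' : ℝ,
      0 ≤ d' → d' ≤ Real.pi / Real.sqrt κ →
      Real.cos (Real.sqrt κ * dist q r) =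
          Real.cos (Real.sqrt κ * dist p q) * Real.cos (Real.sqrt κ * dist p r) +
            Real.sin (Real.sqrt κ * dist p q) * Real.sin (Real.sqrt κ * dist p r) * cosA →
      Real.cos (Real.sqrt κ * d') =
          Real.cos (Real.sqrt κ * t) * Real.cos (Real.sqrt κ * dist p r) +
            Real.sin (Real.sqrt κ * t) * Real.sin (Real.sqrt κ * dist p r) * cosA →
      dist (c t) r ≤ d'

open Real Set

theorem cos_le_cos_of_abs_le_of_add_abs_le {x y : ℝ} (hyx : |y| ≤ x) (hsum : x + |y| ≤ 2 * π) :
    cos x ≤ cos y := by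
  rw [← cos_abs y]
  rcases le_total x π with hx | hx
  · exact cos_le_cos_of_nonneg_of_le_pi (abs_nonneg y) hx hyx
  · rw [← cos_two_pi_sub x]
    exact cos_le_cos_of_nonneg_of_le_pi (abs_nonneg y) (by linarith) (by linarith)

theorem abs_cos_sub_cos_mul_cos_le {u v w : ℝ} (hw : 0 ≤ w) (huv : w ≤ u + v)
    (hvw : u ≤ v + w) (huw : v ≤ u + w) (hper : u + v + w < 2 * π) :
    |cos w - cos u * cos v| ≤ sin u * sin v := by
  have hlow : cos (u + v) ≤ cos w :=
    cos_le_cos_of_abs_le_of_add_abs_le (by rwa [abs_of_nonneg hw])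
      (by rw [abs_of_nonneg hw]; linarith)
  have hhigh : cos w ≤ cos (u - v) :=
    cos_le_cos_of_abs_le_of_add_abs_le (abs_sub_le_iff.mpr ⟨by linarith, by linarith⟩)
      (by cases abs_cases (u - v) <;> linarith)
  rw [cos_add] at hlow
  rw [cos_sub] at hhigh
  exact abs_sub_le_iff.mpr ⟨by linarith, by linarith⟩

theorem exists_mem_Icc_eq_mul_of_abs_le {D S : ℝ} (h : |D| ≤ S) :
    ∃ t ∈ Icc (-1 : ℝ) 1, D = S * t := by
  obtain ⟨hDl, hDu⟩ := abs_le.mp h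
  rcases ((abs_nonneg D).trans h).eq_or_lt with hS | hS
  · exact ⟨0, ⟨by norm_num, by norm_num⟩, by rw [mul_zero]; linarith⟩
  · refine ⟨D / S, ⟨?_, ?_⟩, (mul_div_cancel₀ D hS.ne').symm⟩
    · rw [le_div_iff₀ hS]
      linarith
    · rwa [div_le_one hS]

theorem exists_cos_comparison_angle {M : Type*} [MetricSpace M] {s : ℝ} (hs : 0 < s)
    (p q r : M) (hper : dist p q + dist q r + dist r p < 2 * π / s) :
    ∃ cosA ∈ Icc (-1 : ℝ) 1, cos (s * dist q r) =
      cos (s * dist p q) * cos (s * dist p r) + sin (s * dist p q) * sin (s * dist p r) * cosA := by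
  rw [lt_div_iff₀ hs, dist_comm r p] at hper
  have scaled {x y z : ℝ} (h : x ≤ y + z) : s * x ≤ s * y + s * z := by
    rw [← mul_add]
    exact mul_le_mul_of_nonneg_left h hs.le
  have hbound := abs_cos_sub_cos_mul_cos_le (mul_nonneg hs.le dist_nonneg)
    (scaled (dist_triangle_left q r p)) (scaled (dist_triangle_right p q r))
    (scaled (dist_triangle p q r)) (by linarith)
  obtain ⟨cosA, hA, hD⟩ := exists_mem_Icc_eq_mul_of_abs_le hbound
  exact ⟨cosA, hA, by linarith⟩

theorem abs_cos_mul_cos_add_sin_mul_sin_mul_le_one (t v : ℝ) {c : ℝ} (hc : c ∈ Icc (-1 : ℝ) 1) :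
    |cos t * cos v + sin t * sin v * c| ≤ 1 := by
  have hc2 : c ^ 2 ≤ 1 := by nlinarith [hc.1, hc.2]
  rw [← sq_le_one_iff_abs_le_one]
  nlinarith [sin_sq_add_cos_sq t, sin_sq_add_cos_sq v, sq_nonneg (cos t * sin v * c - sin t * cos v),
    mul_nonneg (sq_nonneg (sin v)) (sub_nonneg.mpr hc2)]

theorem mul_cos_add_mul_sin_add_self (α β u : ℝ) :
    α * cos u + β * sin u + α = 2 * cos (u / 2) * (α * cos (u / 2) + β * sin (u / 2)) := by
  have hcos : cos u = 2 * cos (u / 2) ^ 2 - 1 := by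
    rw [← cos_two_mul]
    congr 1
    ring
  have hsin : sin u = 2 * sin (u / 2) * cos (u / 2) := by
    rw [← sin_two_mul]
    congr 1
    ring
  rw [hcos, hsin]
  ring

theorem IsCATK.comparison_le_cos_dist {κ : ℝ} {M : Type*} [MetricSpace M] (hM : IsCATK κ M)
    (hκ : 0 < κ) {p q r : M} {c : ℝ → M} (hc : IsGeodesicSeg c p q)
    (hper : dist p q + dist q r + dist r p < 2 * π / √κ) {t : ℝ} (ht : t ∈ Icc 0 (dist p q))
    {cosA : ℝ} (hA : cosA ∈ Icc (-1 : ℝ) 1)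
    (hlaw : cos (√κ * dist q r) = cos (√κ * dist p q) * cos (√κ * dist p r) +
      sin (√κ * dist p q) * sin (√κ * dist p r) * cosA) :
    cos (√κ * t) * cos (√κ * dist p r) + sin (√κ * t) * sin (√κ * dist p r) * cosA ≤
      cos (√κ * dist (c t) r) := by
  set X := cos (√κ * t) * cos (√κ * dist p r) + sin (√κ * t) * sin (√κ * dist p r) * cosA
  have hs : 0 < √κ := sqrt_pos.mpr hκ
  obtain ⟨hX₁, hX₂⟩ := abs_le.mp (abs_cos_mul_cos_add_sin_mul_sin_mul_le_one _ _ hA)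
  have hscale : √κ * (arccos X / √κ) = arccos X := mul_div_cancel₀ _ hs.ne'
  have hdist : dist (c t) r ≤ arccos X / √κ :=
    hM p q r c hc hper t ht cosA _ (div_nonneg (arccos_nonneg X) hs.le)
      (div_le_div_of_nonneg_right (arccos_le_pi X) hs.le) hlaw
      (by rw [hscale, cos_arccos hX₁ hX₂])
  calc X = cos (arccos X) := (cos_arccos hX₁ hX₂).symm
    _ ≤ cos (√κ * dist (c t) r) :=
      cos_le_cos_of_nonneg_of_le_pi (by positivity) (arccos_le_pi X)
        (hscale ▸ mul_le_mul_of_nonneg_left hdist hs.le)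

theorem stmt_12_general {M : Type*} [MetricSpace M] (κ : ℝ) (hκ : 0 < κ) (hM : IsCATK κ M)
    (p q r m : M) (c : ℝ → M) (hc : IsGeodesicSeg c p q)
    (hm : m = c (dist p q / 2))
    (hper : dist p q + dist q r + dist r p < 2 * Real.pi / Real.sqrt κ)
    (hmr : dist m r < Real.pi / (2 * Real.sqrt κ)) :
    1 - Real.cos (Real.sqrt κ * dist m r) ≤
      ((1 - Real.cos (Real.sqrt κ * dist p r)) + (1 - Real.cos (Real.sqrt κ * dist q r))) / 2 := by
  have hs : 0 < √κ := sqrt_pos.mpr hκ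
  obtain ⟨cosA, hA, hlaw⟩ := exists_cos_comparison_angle hs p q r hper
  have hcomp := hM.comparison_le_cos_dist hκ hc hper
    ⟨by positivity, half_le_self dist_nonneg⟩ hA hlaw
  rw [← hm, ← mul_div_assoc] at hcomp
  set u := √κ * dist p q
  set f := cos (u / 2) * cos (√κ * dist p r) + sin (u / 2) * sin (√κ * dist p r) * cosA
  have hsum : cos (√κ * dist p r) + cos (√κ * dist q r) = 2 * cos (u / 2) * f := by
    linear_combination hlaw +
      mul_cos_add_mul_sin_add_self (cos (√κ * dist p r)) (sin (√κ * dist p r) * cosA) u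
  have hu : u ≤ π := by
    have hpq : 2 * dist p q ≤ dist p q + dist q r + dist r p := by
      linarith [dist_triangle p r q, dist_comm p r, dist_comm r q]
    rw [lt_div_iff₀ hs] at hper
    nlinarith
  have hu_cos : 0 ≤ cos (u / 2) :=
    cos_nonneg_of_mem_Icc ⟨by linarith [mul_nonneg hs.le (dist_nonneg (x := p) (y := q))],
      by linarith⟩
  have hmr_cos : 0 ≤ cos (√κ * dist m r) := by
    rw [lt_div_iff₀ (by positivity)] at hmr
    exact cos_nonneg_of_mem_Icc ⟨by nlinarith [dist_nonneg (x := m) (y := r)], by linarith⟩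
  have hmid : cos (u / 2) * f ≤ cos (√κ * dist m r) := by
    rcases le_total 0 f with hf | hf <;> nlinarith [cos_le_one (u / 2)]
  linarith

/-- Midpoint convexity of `χ_κ(t) = 1 - cos(√κ t)` in a CAT(κ) space with `κ > 0`:
if `m` is the midpoint of `[p,q]` and `max {d(m,r), d(p,q)} < π/(2√κ)`, then
`χ_κ(d(m,r)) ≤ (χ_κ(d(p,r)) + χ_κ(d(q,r))) / 2`. -/
theorem stmt_12 {M : Type*} [MetricSpace M] (κ : ℝ) (hκ : 0 < κ) (hM : IsCATK κ M)
    (p q r m : M) (c : ℝ → M) (hc : IsGeodesicSeg c p q)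
    (hm : m = c (dist p q / 2))
    (hper : dist p q + dist q r + dist r p < 2 * Real.pi / Real.sqrt κ)
    (hmr : dist m r < Real.pi / (2 * Real.sqrt κ))
    (hpq : dist p q < Real.pi / (2 * Real.sqrt κ)) :
    1 - Real.cos (Real.sqrt κ * dist m r) ≤
      ((1 - Real.cos (Real.sqrt κ * dist p r)) + (1 - Real.cos (Real.sqrt κ * dist q r))) / 2 :=
  stmt_12_general κ hκ hM p q r m c hc hm hper hmr
end

section
/- Positive definite matrix midpoint: for M, N real symmetric positive definite n×n matrices, the matrix P = M^{1/2}(M^{-1/2} N M^{-1/2})^{1/2} M^{1/2} is symmetric positive definite and satisfies d(M,P) = d(P,N) = d(M,N)/2 for the affine-invariant distance d(A,B) = ‖log(A^{-1/2} B A^{-1/2})‖_F. -/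
open Matrix Finset

/-- Frobenius norm of a real square matrix. -/
noncomputable def frobNorm {n : Type*} [Fintype n] (A : Matrix n n ℝ) : ℝ :=
  Real.sqrt (∑ i : n, ∑ j : n, (A i j) ^ 2)

open scoped Classical in
/-- The positive semidefinite square root (junk value `0` off positive semidefinite
matrices). -/
noncomputable def matSqrt {n : Type*} [Fintype n] [DecidableEq n] (A : Matrix n n ℝ) :
    Matrix n n ℝ :=
  if h : A.PosSemidef then h.1.cfc Real.sqrt else 0

open scoped Classical in
/-- The matrix logarithm via the functional calculus of a Hermitian matrix (junk value
`0` off Hermitian matrices). -/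
noncomputable def matLog {n : Type*} [Fintype n] [DecidableEq n] (A : Matrix n n ℝ) :
    Matrix n n ℝ :=
  if h : A.IsHermitian then h.cfc Real.log else 0

/-- The affine-invariant distance `d(A,B) = ‖log(A^{-1/2} B A^{-1/2})‖_F` on positive
definite matrices. -/
noncomputable def aiDist {n : Type*} [Fintype n] [DecidableEq n] (A B : Matrix n n ℝ) : ℝ :=
  frobNorm (matLog ((matSqrt A)⁻¹ * B * (matSqrt A)⁻¹))

/-!
Write `S = M^{1/2}` and `Q = (S⁻¹ N S⁻¹)^{1/2}`, so that `M = S²`, `P = S Q S` and `N = S Q² S`.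
Unfolding the definition gives `d(M, P) = ‖log Q‖` and `d(M, N) = ‖log Q²‖ = 2 ‖log Q‖`.
For `d(P, N)`, put `T = P^{1/2}`: since `T² = S Q S`, the matrix `T⁻¹ N T⁻¹` is the conjugate of `Q`
by `T⁻¹ S`. The logarithm, a polynomial on the finite spectrum, commutes with this conjugation, and
the Frobenius norm `√tr(L²)` of a symmetric `L` is invariant under conjugations that keep `L`
symmetric; hence `d(P, N) = ‖log Q‖` as well.
-/

open scoped MatrixOrder

section MatSqrt

variable {n : Type*} [Fintype n] [DecidableEq n]

lemma matSqrt_eq_sqrt (A : Matrix n n ℝ) : matSqrt A = CFC.sqrt A := by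
  by_cases hA : A.PosSemidef
  · rw [matSqrt, dif_pos hA, ← hA.1.cfc_eq, CFC.sqrt_eq_real_sqrt A hA.nonneg, cfcₙ_eq_cfc]
  · rw [matSqrt, dif_neg hA, CFC.sqrt_of_not_nonneg (by rwa [Matrix.nonneg_iff_posSemidef])]

lemma Matrix.PosDef.matSqrt {A : Matrix n n ℝ} (hA : A.PosDef) : (matSqrt A).PosDef := by
  rw [matSqrt_eq_sqrt, ← Matrix.isStrictlyPositive_iff_posDef]
  exact IsStrictlyPositive.sqrt A (Matrix.isStrictlyPositive_iff_posDef.mpr hA)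

lemma matSqrt_mul_matSqrt_self {A : Matrix n n ℝ} (hA : A.PosSemidef) :
    matSqrt A * matSqrt A = A := by
  rw [matSqrt_eq_sqrt, CFC.sqrt_mul_sqrt_self A hA.nonneg]

lemma matSqrt_mul_self {A : Matrix n n ℝ} (hA : A.PosSemidef) : matSqrt (A * A) = A := by
  rw [matSqrt_eq_sqrt, CFC.sqrt_mul_self A hA.nonneg]

end MatSqrt

open Polynomial in
lemma aeval_units_conj {R A : Type*} [CommSemiring R] [Semiring A] [Algebra R A] (u : Aˣ) (a : A)
    (q : R[X]) : aeval ((u : A) * a * ↑u⁻¹) q = u * aeval a q * ↑u⁻¹ := by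
  simpa [ConjAct.units_smul_def] using
    aeval_algHom_apply (MulSemiringAction.toAlgHom R A (ConjAct.toConjAct u)) a q

lemma cfc_units_conj {R A : Type*} [Field R] [StarRing R] [MetricSpace R]
    [IsTopologicalSemiring R] [ContinuousStar R] [Ring A] [StarRing A] [TopologicalSpace A]
    [Algebra R A] {p : A → Prop} [ContinuousFunctionalCalculus R A p] (f : R → R) (u : Aˣ)
    {a : A} (hfin : (spectrum R a).Finite) (ha : p a) (hua : p (u * a * ↑u⁻¹)) :
    cfc f ((u : A) * a * ↑u⁻¹) = u * cfc f a * ↑u⁻¹ := by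
  classical
  set q := Lagrange.interpolate hfin.toFinset id f
  have hq : ∀ x ∈ spectrum R a, q.eval x = f x := fun x hx =>
    Lagrange.eval_interpolate_at_node f (Set.injOn_id _) (hfin.mem_toFinset.mpr hx)
  have hspec : spectrum R ((u : A) * a * ↑u⁻¹) = spectrum R a := spectrum.units_conjugate
  rw [cfc_congr (fun x hx => (hq x hx).symm), cfc_polynomial q a ha,
    cfc_congr (fun x hx => (hq x (hspec ▸ hx)).symm), cfc_polynomial q _ hua, aeval_units_conj]

section Frobenius

variable {n : Type*} [Fintype n]

lemma frobNorm_eq_sqrt_trace (A : Matrix n n ℝ) : frobNorm A = √(Aᵀ * A).trace := by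
  simp only [frobNorm, Matrix.trace, Matrix.diag_apply, Matrix.mul_apply, Matrix.transpose_apply]
  rw [Finset.sum_comm]
  simp [sq]

lemma frobNorm_smul (c : ℝ) (A : Matrix n n ℝ) : frobNorm (c • A) = |c| * frobNorm A := by
  simp only [frobNorm, Matrix.smul_apply, smul_eq_mul, mul_pow, ← Finset.mul_sum]
  rw [Real.sqrt_mul (sq_nonneg c), Real.sqrt_sq_eq_abs]

lemma frobNorm_units_conj [DecidableEq n] (u : (Matrix n n ℝ)ˣ) {L : Matrix n n ℝ}
    (hL : L.IsSymm) (huL : Matrix.IsSymm ((u : Matrix n n ℝ) * L * (↑u⁻¹ : Matrix n n ℝ))) :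
    frobNorm ((u : Matrix n n ℝ) * L * (↑u⁻¹ : Matrix n n ℝ)) = frobNorm L := by
  rw [frobNorm_eq_sqrt_trace, frobNorm_eq_sqrt_trace, huL.eq, hL.eq, ← sq, ← sq,
    Units.conj_pow, Matrix.trace_units_conj]

end Frobenius

section MatLog

variable {n : Type*} [Fintype n] [DecidableEq n]

lemma matLog_eq_cfc {A : Matrix n n ℝ} (hA : A.IsHermitian) : matLog A = cfc Real.log A := by
  rw [matLog, dif_pos hA, hA.cfc_eq]

lemma isSymm_matLog (A : Matrix n n ℝ) : (matLog A).IsSymm := by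
  by_cases hA : A.IsHermitian
  · rw [matLog_eq_cfc hA, ← Matrix.isHermitian_iff_isSymm]
    exact (cfc_predicate Real.log A).isHermitian
  · rw [matLog, dif_neg hA]
    exact Matrix.isSymm_zero

lemma matLog_pow {A : Matrix n n ℝ} (hA : A.IsHermitian) (k : ℕ) :
    matLog (A ^ k) = (k : ℝ) • matLog A := by
  have hfin := Matrix.finite_real_spectrum (A := A)
  rw [matLog_eq_cfc (hA.pow k), matLog_eq_cfc hA,
    ← cfc_comp_pow _ _ _ ((hfin.image _).continuousOn _) hA.isSelfAdjoint,
    ← cfc_const_mul _ _ _ (hfin.continuousOn _)]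
  simp only [Real.log_pow]

lemma frobNorm_matLog_units_conj (u : (Matrix n n ℝ)ˣ) {A : Matrix n n ℝ} (hA : A.IsHermitian)
    (huA : ((u : Matrix n n ℝ) * A * (↑u⁻¹ : Matrix n n ℝ)).IsHermitian) :
    frobNorm (matLog ((u : Matrix n n ℝ) * A * (↑u⁻¹ : Matrix n n ℝ))) = frobNorm (matLog A) := by
  have hlog : matLog ((u : Matrix n n ℝ) * A * (↑u⁻¹ : Matrix n n ℝ)) =
      u * matLog A * (↑u⁻¹ : Matrix n n ℝ) := by
    rw [matLog_eq_cfc huA, matLog_eq_cfc hA, cfc_units_conj _ _ Matrix.finite_real_spectrum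
      hA.isSelfAdjoint huA.isSelfAdjoint]
  rw [hlog, frobNorm_units_conj u (isSymm_matLog A) (hlog ▸ isSymm_matLog _)]

end MatLog

lemma inv_mul_mul_inv_eq_conj_of_mul_self {G : Type*} [Group G] {s q t : G}
    (h : t * t = s * q * s) :
    t⁻¹ * (s * q ^ 2 * s) * t⁻¹ = (t⁻¹ * s) * q * (t⁻¹ * s)⁻¹ := by
  obtain rfl : q = s⁻¹ * (t * t) * s⁻¹ := by rw [h]; group
  simp only [sq]
  group

section Distance

variable {n : Type*} [Fintype n] [DecidableEq n]

lemma Matrix.PosDef.mul_mul_self_of_posDef {S X : Matrix n n ℝ} (hS : S.PosDef)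
    (hX : X.PosDef) : (S * X * S).PosDef := by
  simpa only [star_eq_conjTranspose, hS.1.eq] using
    (Matrix.IsUnit.posDef_star_right_conjugate_iff hS.isUnit).mpr hX

lemma aiDist_mul_self_conj {S : Matrix n n ℝ} (hS : S.PosDef) (X : Matrix n n ℝ) :
    aiDist (S * S) (S * X * S) = frobNorm (matLog X) := by
  have := hS.isUnit.invertible
  simp [aiDist, matSqrt_mul_self hS.posSemidef, Matrix.mul_assoc]

lemma aiDist_conj_conj_sq {S Q : Matrix n n ℝ} (hS : S.PosDef) (hQ : Q.PosDef) :
    aiDist (S * Q * S) (S * Q ^ 2 * S) = frobNorm (matLog Q) := by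
  have hP := hS.mul_mul_self_of_posDef hQ
  have hT := hP.matSqrt
  have hTT := matSqrt_mul_matSqrt_self hP.posSemidef
  have hX :
      ((matSqrt (S * Q * S))⁻¹ * (S * Q ^ 2 * S) * (matSqrt (S * Q * S))⁻¹).IsHermitian := by
    have hN := Matrix.isHermitian_mul_mul_conjTranspose S (hQ.1.pow 2)
    rw [hS.1.eq] at hN
    simpa only [hT.1.inv.eq] using
      Matrix.isHermitian_mul_mul_conjTranspose (matSqrt (S * Q * S))⁻¹ hN
  rw [aiDist]
  generalize matSqrt (S * Q * S) = T at hT hTT hX ⊢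
  lift S to (Matrix n n ℝ)ˣ using hS.isUnit
  lift Q to (Matrix n n ℝ)ˣ using hQ.isUnit
  lift T to (Matrix n n ℝ)ˣ using hT.isUnit
  norm_cast at hTT
  have hconj : (T : Matrix n n ℝ)⁻¹ * (S * Q ^ 2 * S) * (T : Matrix n n ℝ)⁻¹
      = ((T⁻¹ * S : (Matrix n n ℝ)ˣ) : Matrix n n ℝ) * Q * (↑(T⁻¹ * S)⁻¹ : Matrix n n ℝ) := by
    simpa [Matrix.coe_units_inv] using
      congrArg Units.val (inv_mul_mul_inv_eq_conj_of_mul_self hTT)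
  rw [hconj] at hX ⊢
  exact frobNorm_matLog_units_conj _ hQ.1 hX

end Distance

/-- The geodesic midpoint `P = M^{1/2} (M^{-1/2} N M^{-1/2})^{1/2} M^{1/2}` of two
positive definite matrices is positive definite and is the metric midpoint for the
affine-invariant distance. -/
theorem stmt_17 {n : Type*} [Fintype n] [DecidableEq n] (M N : Matrix n n ℝ)
    (hM : M.PosDef) (hN : N.PosDef)
    (P : Matrix n n ℝ)
    (hP : P = matSqrt M * matSqrt ((matSqrt M)⁻¹ * N * (matSqrt M)⁻¹) * matSqrt M) :
    P.PosDef ∧ aiDist M P = aiDist M N / 2 ∧ aiDist P N = aiDist M N / 2 := by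
  set S := matSqrt M
  set Q := matSqrt (S⁻¹ * N * S⁻¹)
  have hS : S.PosDef := hM.matSqrt
  have hQ : Q.PosDef := (hS.inv.mul_mul_self_of_posDef hN).matSqrt
  have hMS : S * S = M := matSqrt_mul_matSqrt_self hM.posSemidef
  have hNSQ : S * Q ^ 2 * S = N := by
    rw [sq, matSqrt_mul_matSqrt_self (hS.inv.mul_mul_self_of_posDef hN).posSemidef]
    have := hS.isUnit.invertible
    simp [Matrix.mul_assoc]
  have hMP : aiDist M P = frobNorm (matLog Q) := by
    rw [hP, ← hMS]; exact aiDist_mul_self_conj hS Q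
  have hMN : aiDist M N = 2 * frobNorm (matLog Q) := by
    rw [← hNSQ, ← hMS, aiDist_mul_self_conj hS, matLog_pow hQ.1, frobNorm_smul]
    norm_num
  have hPN : aiDist P N = frobNorm (matLog Q) := by
    rw [hP, ← hNSQ]; exact aiDist_conj_conj_sq hS hQ
  refine ⟨hP ▸ hS.mul_mul_self_of_posDef hQ, ?_, ?_⟩ <;> linarith
end
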